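/- Let (G,σ) be a d-regular finite signed graph with the counting measure π ≡ 1 as vertex measure. Then (1/(2d))·h_out^σ ≤ h^σ ≤ h_out^σ, where h^σ is the signed Cheeger constant and h_out^σ is the signed outer vertex isoperimetric constant. -/

import Mathlib

attribute [local instance] Classical.propDecidable

/-- The outer vertex boundary of a finite set `U`: vertices outside `U` with a neighbor in `U`. -/
noncomputable def outBd {V : Type*} [Fintype V] (Adj : V → V → Prop) (U : Finset V) : Finset V :=
  Finset.univ.filter fun y => y ∉ U ∧ ∃ x ∈ U, Adj x y

/-- The edge boundary size of `U`: the number of edges with one endpoint in `U` and the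
other outside `U`. -/
noncomputable def edgeBd {V : Type*} [Fintype V] (Adj : V → V → Prop) (U : Finset V) : ℕ :=
  ((U ×ˢ Uᶜ).filter fun p => Adj p.1 p.2).card

/-- The volume of `U`: the sum of vertex degrees over `U`. -/
noncomputable def vol {V : Type*} [Fintype V] (Adj : V → V → Prop) (U : Finset V) : ℕ :=
  ∑ x ∈ U, (Finset.univ.filter fun y => Adj x y).card

/-- The edge frustration index `ι^σ(U)` of a subset `U` of a signed graph. -/
noncomputable def iotaEdge {V : Type*} [Fintype V] (Adj : V → V → Prop) (σ : V → V → ℝ)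
    (U : Finset V) : ℝ :=
  sInf {r : ℝ | ∃ τ : V → ℝ, (∀ x : V, τ x = 1 ∨ τ x = -1) ∧
    r = (1 / 2) * ∑ x ∈ U, ∑ y ∈ U.filter (fun y => Adj x y), |τ x - σ x y * τ y|}

/-- The signed Cheeger constant `h^σ`. -/
noncomputable def hSigned {V : Type*} [Fintype V] (Adj : V → V → Prop) (σ : V → V → ℝ) : ℝ :=
  sInf {r : ℝ | ∃ U : Finset V, U.Nonempty ∧
    r = (iotaEdge Adj σ U + (edgeBd Adj U : ℝ)) / (vol Adj U : ℝ)}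

/-- The `∞`-frustration index `ι_∞^σ(U)` of a subset `U` of a signed graph
(with the counting measure). -/
noncomputable def iotaInf {V : Type*} [Fintype V] (Adj : V → V → Prop) (σ : V → V → ℝ)
    (U : Finset V) : ℝ :=
  sInf {r : ℝ | ∃ τ : V → ℝ, (∀ x : V, τ x = 1 ∨ τ x = -1) ∧
    r = (1 / 2) * ∑ x ∈ U, ⨆ y ∈ {y : V | y ∈ U ∧ Adj x y}, |τ x - σ x y * τ y|}

/-- The signed outer vertex isoperimetric constant `h_out^σ` (with the counting measure). -/
noncomputable def hOutSigned {V : Type*} [Fintype V] (Adj : V → V → Prop) (σ : V → V → ℝ) : ℝ :=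
  sInf {r : ℝ | ∃ U : Finset V, U.Nonempty ∧
    r = (2 * iotaInf Adj σ U + ((outBd Adj U).card : ℝ)) / (U.card : ℝ)}

/-! For a `d`-regular graph `vol U = d |U|`. For each signing `τ` and vertex `x`, the largest
frustrated term at `x` is at most the sum of those terms, which is at most `d` times the largest;
and every outer boundary vertex of `U` carries between `1` and `d` boundary edges. Hence
`ι_∞(U) ≤ ι(U) ≤ d ι_∞(U)` and `|∂_out U| ≤ |∂U| ≤ d |∂_out U|`, which compare the two ratios
set by set. All the infima range over finite sets, so they are attained (or both `0` when `V`
is empty), and the set-wise comparisons pass to the constants. -/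

section FiniteInfimum

variable {ι : Type*} {P : ι → Prop} (F G : ι → ℝ)

theorem csInf_exists_le (hP : {i | P i}.Finite) {i : ι} (hi : P i) :
    sInf {r : ℝ | ∃ i, P i ∧ r = F i} ≤ F i :=
  csInf_le ((hP.image F).subset (by rintro _ ⟨j, hj, rfl⟩; exact ⟨j, hj, rfl⟩)).bddBelow
    ⟨i, hi, rfl⟩

theorem exists_csInf_eq (hP : {i | P i}.Finite) (hne : ∃ i, P i) :
    ∃ i, P i ∧ sInf {r : ℝ | ∃ i, P i ∧ r = F i} = F i := by
  obtain ⟨i, hi⟩ := hne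
  refine Set.Nonempty.csInf_mem (s := {r : ℝ | ∃ i, P i ∧ r = F i}) ⟨F i, i, hi, rfl⟩
    ((hP.image F).subset ?_)
  rintro _ ⟨j, hj, rfl⟩
  exact ⟨j, hj, rfl⟩

theorem csInf_exists_eq_zero (hne : ¬∃ i, P i) : sInf {r : ℝ | ∃ i, P i ∧ r = F i} = 0 := by
  have hempty : {r : ℝ | ∃ i, P i ∧ r = F i} = ∅ :=
    Set.eq_empty_of_forall_notMem fun _ hr => hne (hr.imp fun _ => And.left)
  rw [hempty, Real.sInf_empty]

theorem csInf_exists_le_mul_csInf (hP : {i | P i}.Finite) {c : ℝ}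
    (hFG : ∀ i, P i → F i ≤ c * G i) :
    sInf {r : ℝ | ∃ i, P i ∧ r = F i} ≤ c * sInf {r : ℝ | ∃ i, P i ∧ r = G i} := by
  by_cases hne : ∃ i, P i
  · obtain ⟨i, hi, hGi⟩ := exists_csInf_eq G hP hne
    rw [hGi]
    exact (csInf_exists_le F hP hi).trans (hFG i hi)
  · simp [csInf_exists_eq_zero _ hne]

theorem mul_csInf_exists_le_csInf (hP : {i | P i}.Finite) {c : ℝ} (hc : 0 ≤ c)
    (hGF : ∀ i, P i → c * G i ≤ F i) :
    c * sInf {r : ℝ | ∃ i, P i ∧ r = G i} ≤ sInf {r : ℝ | ∃ i, P i ∧ r = F i} := by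
  by_cases hne : ∃ i, P i
  · obtain ⟨i, hi, hFi⟩ := exists_csInf_eq F hP hne
    rw [hFi]
    exact (mul_le_mul_of_nonneg_left (csInf_exists_le G hP hi) hc).trans (hGF i hi)
  · simp [csInf_exists_eq_zero _ hne]

theorem csInf_exists_mono (hP : {i | P i}.Finite) (hFG : ∀ i, P i → F i ≤ G i) :
    sInf {r : ℝ | ∃ i, P i ∧ r = F i} ≤ sInf {r : ℝ | ∃ i, P i ∧ r = G i} :=
  (csInf_exists_le_mul_csInf F G hP fun i hi => (hFG i hi).trans_eq (one_mul _).symm).trans_eq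
    (one_mul _)

end FiniteInfimum

theorem Finset.biSup_le_sum {α : Type*} {s : Finset α} {f : α → ℝ} (hf : ∀ y ∈ s, 0 ≤ f y) :
    ⨆ y ∈ (s : Set α), f y ≤ ∑ y ∈ s, f y :=
  Real.iSup_le (fun _ => Real.iSup_le (fun hy => Finset.single_le_sum hf hy) (Finset.sum_nonneg hf))
    (Finset.sum_nonneg hf)

theorem Finset.sum_le_card_mul_biSup {α : Type*} (s : Finset α) (f : α → ℝ) :
    ∑ y ∈ s, f y ≤ s.card * ⨆ y ∈ (s : Set α), f y := by
  have hbdd : BddAbove (⋃ y, Set.range fun (_ : y ∈ (s : Set α)) => f y) := by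
    refine (s.finite_toSet.image f).bddAbove.mono ?_
    simp only [Set.iUnion_subset_iff, Set.range_subset_iff]
    exact fun y hy => ⟨y, hy, rfl⟩
  rw [← nsmul_eq_mul]
  exact Finset.sum_le_card_nsmul s f _ fun y hy =>
    le_ciSup₂ (f := fun y (_ : y ∈ (s : Set α)) => f y) hbdd y hy

theorem finite_setOf_sign {V : Type*} [Finite V] :
    {τ : V → ℝ | ∀ x, τ x = 1 ∨ τ x = -1}.Finite :=
  Set.Finite.pi' (t := fun _ => {1, -1}) fun _ => Set.toFinite _

section SignedGraph

variable {V : Type*} (Adj : V → V → Prop) (σ : V → V → ℝ) (U : Finset V)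

/-- `iotaEdge Adj σ U` and `iotaInf Adj σ U` are, definitionally, the infima of
`edgeFrustration Adj σ U` and `supFrustration Adj σ U` over the signings `τ : V → {±1}`. -/
noncomputable def edgeFrustration (τ : V → ℝ) : ℝ :=
  (1 / 2) * ∑ x ∈ U, ∑ y ∈ U.filter (fun y => Adj x y), |τ x - σ x y * τ y|

noncomputable def supFrustration (τ : V → ℝ) : ℝ :=
  (1 / 2) * ∑ x ∈ U, ⨆ y ∈ {y : V | y ∈ U ∧ Adj x y}, |τ x - σ x y * τ y|

theorem supFrustration_nonneg (τ : V → ℝ) : 0 ≤ supFrustration Adj σ U τ :=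
  mul_nonneg (by norm_num) (Finset.sum_nonneg fun _ _ =>
    Real.iSup_nonneg fun _ => Real.iSup_nonneg fun _ => abs_nonneg _)

theorem supFrustration_le_edgeFrustration (τ : V → ℝ) :
    supFrustration Adj σ U τ ≤ edgeFrustration Adj σ U τ := by
  refine mul_le_mul_of_nonneg_left (Finset.sum_le_sum fun x _ => ?_) (by norm_num)
  rw [← Finset.coe_filter]
  exact Finset.biSup_le_sum fun _ _ => abs_nonneg _

theorem edgeFrustration_le_mul_supFrustration [Fintype V] {d : ℕ}
    (hdeg : ∀ x, (Finset.univ.filter fun y => Adj x y).card ≤ d) (τ : V → ℝ) :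
    edgeFrustration Adj σ U τ ≤ d * supFrustration Adj σ U τ := by
  rw [edgeFrustration, supFrustration, mul_left_comm, Finset.mul_sum (a := (d : ℝ))]
  refine mul_le_mul_of_nonneg_left (Finset.sum_le_sum fun x _ => ?_) (by norm_num)
  have hcard : ((U.filter fun y => Adj x y).card : ℝ) ≤ d := by
    exact_mod_cast (Finset.card_le_card (Finset.filter_subset_filter _ U.subset_univ)).trans
      (hdeg x)
  rw [← Finset.coe_filter]
  exact (Finset.sum_le_card_mul_biSup _ _).trans (mul_le_mul_of_nonneg_right hcard
    (Real.iSup_nonneg fun _ => Real.iSup_nonneg fun _ => abs_nonneg _))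

theorem iotaInf_nonneg [Fintype V] : 0 ≤ iotaInf Adj σ U :=
  Real.sInf_nonneg (by rintro _ ⟨τ, -, rfl⟩; exact supFrustration_nonneg Adj σ U τ)

theorem iotaInf_le_iotaEdge [Fintype V] : iotaInf Adj σ U ≤ iotaEdge Adj σ U :=
  csInf_exists_mono (supFrustration Adj σ U) (edgeFrustration Adj σ U) finite_setOf_sign
    fun τ _ => supFrustration_le_edgeFrustration Adj σ U τ

theorem iotaEdge_le_mul_iotaInf [Fintype V] {d : ℕ}
    (hdeg : ∀ x, (Finset.univ.filter fun y => Adj x y).card ≤ d) :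
    iotaEdge Adj σ U ≤ d * iotaInf Adj σ U :=
  csInf_exists_le_mul_csInf (edgeFrustration Adj σ U) (supFrustration Adj σ U)
    finite_setOf_sign fun τ _ => edgeFrustration_le_mul_supFrustration Adj σ U hdeg τ

theorem card_outBd_le_edgeBd [Fintype V] : (outBd Adj U).card ≤ edgeBd Adj U := by
  refine Finset.card_le_card_of_surjOn Prod.snd fun y hy => ?_
  simp only [outBd, Finset.coe_filter, Finset.mem_univ, true_and, Set.mem_ofPred_eq] at hy
  obtain ⟨hyU, x, hx, hxy⟩ := hy
  exact ⟨(x, y), by simp [hx, hyU, hxy], rfl⟩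

theorem edgeBd_le_mul_card_outBd [Fintype V] (hsymm : ∀ x y : V, Adj x y → Adj y x) {d : ℕ}
    (hdeg : ∀ x, (Finset.univ.filter fun y => Adj x y).card ≤ d) :
    edgeBd Adj U ≤ d * (outBd Adj U).card := by
  refine Finset.card_le_mul_card_image_of_maps_to (f := Prod.snd) ?_ d fun y _ => ?_
  · rintro ⟨x, y⟩ hxy
    simp only [Finset.mem_filter, Finset.mem_product, Finset.mem_compl] at hxy
    simp only [outBd, Finset.mem_filter, Finset.mem_univ, true_and]
    exact ⟨hxy.1.2, x, hxy.1.1, hxy.2⟩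
  · refine (Finset.card_le_card_of_injOn Prod.fst (fun p hp => ?_) fun p hp q hq hpq => ?_).trans
      (hdeg y)
    · simp only [Finset.coe_filter, Finset.mem_filter, Finset.mem_product, Set.mem_ofPred_eq] at hp
      simpa [hp.2] using hsymm _ _ hp.1.2
    · simp only [Finset.coe_filter, Finset.mem_filter, Set.mem_ofPred_eq] at hp hq
      exact Prod.ext hpq (hp.2.trans hq.2.symm)

theorem vol_eq_card_mul [Fintype V] {d : ℕ}
    (hreg : ∀ x, (Finset.univ.filter fun y => Adj x y).card = d) :
    vol Adj U = U.card * d := by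
  rw [vol, Finset.sum_congr rfl fun x _ => hreg x, Finset.sum_const, smul_eq_mul]

theorem cheegerRatio_le_outRatio [Fintype V] (hsymm : ∀ x y : V, Adj x y → Adj y x) {d : ℕ}
    (hreg : ∀ x, (Finset.univ.filter fun y => Adj x y).card = d) :
    (iotaEdge Adj σ U + (edgeBd Adj U : ℝ)) / (vol Adj U : ℝ) ≤
      (2 * iotaInf Adj σ U + ((outBd Adj U).card : ℝ)) / (U.card : ℝ) := by
  have hdeg x := (hreg x).le
  have hiota := iotaEdge_le_mul_iotaInf Adj σ U hdeg
  have hbd : (edgeBd Adj U : ℝ) ≤ d * (outBd Adj U).card := by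
    exact_mod_cast edgeBd_le_mul_card_outBd Adj U hsymm hdeg
  have hinf : 0 ≤ d * iotaInf Adj σ U := mul_nonneg d.cast_nonneg (iotaInf_nonneg Adj σ U)
  rw [vol_eq_card_mul Adj U hreg, Nat.cast_mul, mul_comm, div_mul_eq_div_div]
  refine div_le_div_of_nonneg_right (div_le_of_le_mul₀ d.cast_nonneg ?_ (by linarith))
    U.card.cast_nonneg
  exact add_nonneg (mul_nonneg zero_le_two (iotaInf_nonneg Adj σ U)) (Nat.cast_nonneg _)

theorem outRatio_le_cheegerRatio [Fintype V] {d : ℕ}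
    (hreg : ∀ x, (Finset.univ.filter fun y => Adj x y).card = d) :
    1 / (2 * (d : ℝ)) * ((2 * iotaInf Adj σ U + ((outBd Adj U).card : ℝ)) / (U.card : ℝ)) ≤
      (iotaEdge Adj σ U + (edgeBd Adj U : ℝ)) / (vol Adj U : ℝ) := by
  have hiota := iotaInf_le_iotaEdge Adj σ U
  have hbd : ((outBd Adj U).card : ℝ) ≤ edgeBd Adj U := by
    exact_mod_cast card_outBd_le_edgeBd Adj U
  rw [vol_eq_card_mul Adj U hreg, Nat.cast_mul]
  calc 1 / (2 * (d : ℝ)) * ((2 * iotaInf Adj σ U + ((outBd Adj U).card : ℝ)) / (U.card : ℝ))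
      = (iotaInf Adj σ U + ((outBd Adj U).card : ℝ) / 2) / (U.card * d) := by ring
    _ ≤ (iotaEdge Adj σ U + (edgeBd Adj U : ℝ)) / (U.card * d) := by
      gcongr
      linarith [(outBd Adj U).card.cast_nonneg (α := ℝ)]

end SignedGraph

theorem hSigned_between_hOutSigned_general {V : Type*} [Fintype V] (Adj : V → V → Prop)
    (σ : V → V → ℝ) (d : ℕ)
    (hsymm : ∀ x y : V, Adj x y → Adj y x)
    (hreg : ∀ x : V, (Finset.univ.filter fun y => Adj x y).card = d) :
    (1 / (2 * (d : ℝ))) * hOutSigned Adj σ ≤ hSigned Adj σ ∧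
    hSigned Adj σ ≤ hOutSigned Adj σ :=
  ⟨mul_csInf_exists_le_csInf _ _ (Set.toFinite _) (by positivity)
      fun U _ => outRatio_le_cheegerRatio Adj σ U hreg,
    csInf_exists_mono _ _ (Set.toFinite _) fun U _ => cheegerRatio_le_outRatio Adj σ U hsymm hreg⟩

/-- For a `d`-regular finite signed graph with the counting measure,
`(1/(2d)) h_out^σ ≤ h^σ ≤ h_out^σ`. -/
theorem hSigned_between_hOutSigned {V : Type*} [Fintype V] (Adj : V → V → Prop)
    (σ : V → V → ℝ) (d : ℕ)
    (hsymm : ∀ x y : V, Adj x y → Adj y x)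
    (hσsymm : ∀ x y : V, σ x y = σ y x)
    (hσsign : ∀ x y : V, Adj x y → σ x y = 1 ∨ σ x y = -1)
    (hreg : ∀ x : V, (Finset.univ.filter fun y => Adj x y).card = d) :
    (1 / (2 * (d : ℝ))) * hOutSigned Adj σ ≤ hSigned Adj σ ∧
    hSigned Adj σ ≤ hOutSigned Adj σ :=
  hSigned_between_hOutSigned_general Adj σ d hsymm hreg
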